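/- arXiv:2309.12662 — 4 statements merged into one kernel-verified Lean document; each statement's English description precedes it below -/
import Mathlib

section
/- For every n ≥ 1, every sequence (a_1, …, a_n) of integers with a_i ≥ m for all i, and every 1 ≤ k ≤ n, one has ((a_k + m)θ)/2 ≤ q_n(a_1, …, a_n) / q_{n−1}(a_1, …, a_{k−1}, a_{k+1}, …, a_n) ≤ (a_k + m)θ, where the denominator is the continuant of the sequence obtained by deleting the k-th entry. -/
open Filter Set

noncomputable section

namespace ThetaExp

/-- `θ = 1/√m`, so that `θ² = 1/m`. -/
noncomputable def θ (m : ℕ) : ℝ := 1 / Real.sqrt m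

/-- The Gauss-type map `T_θ` on `[0, θ]`. -/
noncomputable def T (m : ℕ) (x : ℝ) : ℝ :=
  if x = 0 then 0 else 1 / x - θ m * ⌊1 / (x * θ m)⌋

/-- `Ω = (0, θ) \ ℚ`. -/
def Ω (m : ℕ) : Set ℝ := {x ∈ Set.Ioo 0 (θ m) | Irrational x}

/-- The `n`-th digit `a_n(x)` of the θ-expansion of `x` (for `n ≥ 1`):
`a_1(x) = ⌊1/(xθ)⌋` and `a_{n+1}(x) = a_1(T_θ^n x)`. -/
noncomputable def digit (m n : ℕ) (x : ℝ) : ℕ :=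
  ⌊1 / ((T m)^[n - 1] x * θ m)⌋₊

/-- `L_n(x) = max_{1 ≤ i ≤ n} a_i(x)`. -/
noncomputable def Lmax (m n : ℕ) (x : ℝ) : ℕ :=
  (Finset.Icc 1 n).sup (fun i => digit m i x)

/-- `E(η) = {x ∈ Ω : lim_{n → ∞} L_n(x) log log n / n = η}`. -/
def Eset (m : ℕ) (η : ℝ) : Set ℝ :=
  {x ∈ Ω m | Tendsto (fun n : ℕ => (Lmax m n x : ℝ) * Real.log (Real.log n) / n)
    atTop (nhds η)}

/-- `E_M = {x ∈ Ω : m ≤ a_n(x) ≤ M for all n ≥ 1}`. -/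
def EM (m M : ℕ) : Set ℝ :=
  {x ∈ Ω m | ∀ n, 1 ≤ n → m ≤ digit m n x ∧ digit m n x ≤ M}

/-- Auxiliary continuant: `pA m a k = p_{k-1}(a_1, …)`, so that
`pA 0 = p_{-1} = 1`, `pA 1 = p_0 = 0`, and `p_k = a_k θ p_{k-1} + p_{k-2}`. -/
noncomputable def pA (m : ℕ) (a : ℕ → ℕ) : ℕ → ℝ
  | 0 => 1
  | 1 => 0
  | n + 2 => (a (n + 1) : ℝ) * θ m * pA m a (n + 1) + pA m a n

/-- Auxiliary continuant: `qA m a k = q_{k-1}(a_1, …)`, so that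
`qA 0 = q_{-1} = 0`, `qA 1 = q_0 = 1`, and `q_k = a_k θ q_{k-1} + q_{k-2}`. -/
noncomputable def qA (m : ℕ) (a : ℕ → ℕ) : ℕ → ℝ
  | 0 => 0
  | 1 => 1
  | n + 2 => (a (n + 1) : ℝ) * θ m * qA m a (n + 1) + qA m a n

/-- The continuant `p_n(a_1, …, a_n)`. -/
noncomputable def p (m : ℕ) (a : ℕ → ℕ) (n : ℕ) : ℝ := pA m a (n + 1)

/-- The continuant `q_n(a_1, …, a_n)`. -/
noncomputable def q (m : ℕ) (a : ℕ → ℕ) (n : ℕ) : ℝ := qA m a (n + 1)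

/-- Fundamental interval `I_n(a_1, …, a_n) = {x ∈ Ω : a_i(x) = a_i, i = 1, …, n}`. -/
def cyl (m n : ℕ) (a : ℕ → ℕ) : Set ℝ :=
  {x ∈ Ω m | ∀ i, 1 ≤ i → i ≤ n → digit m i x = a i}

/-- `E_M(η)`: the digits at square positions `k²` (k ≥ 2) equal
`⌊η k² / log log k²⌋`, and the other digits lie in `[m, M]`. -/
def EMeta (m M : ℕ) (η : ℝ) : Set ℝ :=
  {x ∈ Ω m |
    (∀ k : ℕ, 2 ≤ k → digit m (k ^ 2) x = ⌊η * (k : ℝ) ^ 2 / Real.log (Real.log ((k : ℝ) ^ 2))⌋₊) ∧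
    (∀ i, 1 ≤ i → (¬ ∃ k : ℕ, 2 ≤ k ∧ i = k ^ 2) → m ≤ digit m i x ∧ digit m i x ≤ M)}

/-- Membership in `A_n` (with `n_k = (k+1)²` for `k ≥ 1`). -/
def memA (m M n : ℕ) (η : ℝ) (a : ℕ → ℕ) : Prop :=
  (∀ i, 1 ≤ i → i ≤ n → m ≤ a i) ∧
  (∀ k : ℕ, 1 ≤ k → (k + 1) ^ 2 ≤ n →
    a ((k + 1) ^ 2) = ⌊η * ((k : ℝ) + 1) ^ 2 / Real.log (Real.log (((k : ℝ) + 1) ^ 2))⌋₊) ∧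
  (∀ i, 1 ≤ i → i ≤ n → (¬ ∃ k : ℕ, 1 ≤ k ∧ i = (k + 1) ^ 2) → m ≤ a i ∧ a i ≤ M)

/-- `c(n) = #{k ≥ 1 : (k+1)² ≤ n}`. -/
def cc (n : ℕ) : ℕ :=
  ((Finset.range (n + 1)).filter (fun k => 1 ≤ k ∧ (k + 1) ^ 2 ≤ n)).card

/-- The sequence obtained from `a` by deleting the entries at the positions
`(k+1)²`, `k ≥ 1` (i.e. the `j`-th entry of the new sequence is the entry of `a`
at the `j`-th position (1-indexed) that is not of the form `(k+1)²`, `k ≥ 1`). -/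
noncomputable def delSq (a : ℕ → ℕ) : ℕ → ℕ :=
  fun j => a (Nat.nth (fun i => 1 ≤ i ∧ ¬ ∃ k : ℕ, 1 ≤ k ∧ i = (k + 1) ^ 2) (j - 1))

end ThetaExp

open ThetaExp

lemma aux_qA_congr (m : ℕ) : ∀ (n : ℕ) (a b : ℕ → ℕ),
    (∀ i, 1 ≤ i → i < n → a i = b i) → qA m a n = qA m b n := by
  intro n
  induction n using Nat.twoStepInduction with
  | zero => intros; simp [qA]
  | one => intros; simp [qA]
  | more n ih1 ih2 =>
    intro a b h
    simp only [qA]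
    rw [h (n+1) (by omega) (by omega), ih1 a b (fun i h1 h2 => h i h1 (by omega)),
      ih2 a b (fun i h1 h2 => h i h1 (by omega))]

lemma aux_pA_congr (m : ℕ) : ∀ (n : ℕ) (a b : ℕ → ℕ),
    (∀ i, 1 ≤ i → i < n → a i = b i) → pA m a n = pA m b n := by
  intro n
  induction n using Nat.twoStepInduction with
  | zero => intros; simp [pA]
  | one => intros; simp [pA]
  | more n ih1 ih2 =>
    intro a b h
    simp only [pA]
    rw [h (n+1) (by omega) (by omega), ih1 a b (fun i h1 h2 => h i h1 (by omega)),
      ih2 a b (fun i h1 h2 => h i h1 (by omega))]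

lemma aux_qA_rec (m : ℕ) (a : ℕ → ℕ) (n : ℕ) :
    qA m a (n + 2) = (a (n + 1) : ℝ) * θ m * qA m a (n + 1) + qA m a n := rfl

lemma aux_pA_rec (m : ℕ) (a : ℕ → ℕ) (n : ℕ) :
    pA m a (n + 2) = (a (n + 1) : ℝ) * θ m * pA m a (n + 1) + pA m a n := rfl

lemma aux_qA_split (m k : ℕ) (a : ℕ → ℕ) : ∀ j,
    qA m a (k + (j + 1)) =
      qA m a (k + 1) * qA m (fun i => a (i + k)) (j + 1)
        + qA m a k * pA m (fun i => a (i + k)) (j + 1) := by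
  intro j
  induction j using Nat.twoStepInduction with
  | zero => simp [qA, pA]
  | one =>
    have h1 : k + (1 + 1) = k + 2 := by omega
    rw [h1, aux_qA_rec]
    show _ = qA m a (k+1) * qA m (fun i => a (i + k)) 2 + qA m a k * pA m (fun i => a (i + k)) 2
    rw [aux_qA_rec m _ 0, aux_pA_rec m _ 0]
    simp only [qA, pA]
    have h2 : 1 + k = k + 1 := by omega
    rw [h2]; ring
  | more j ih1 ih2 =>
    have h1 : k + (j + 2 + 1) = (k + (j + 1)) + 2 := by omega
    rw [h1, aux_qA_rec, show j + 2 + 1 = (j + 1) + 2 from by omega,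
      aux_qA_rec m _ (j+1), aux_pA_rec m _ (j+1),
      show k + (j + 1) + 1 = k + (j + 1 + 1) from by omega, ih2, ih1]
    show _ = _ * ((a (j + 1 + 1 + k) : ℝ) * θ m * _ + _) + _ * ((a (j + 1 + 1 + k) : ℝ) * θ m * _ + _)
    rw [show j + 1 + 1 + k = k + (j + 1 + 1) from by omega]
    ring

-- chain lemmas
lemma aux_sqrt_ge_one (m : ℕ) (hm : 1 ≤ m) : 1 ≤ Real.sqrt m := by
  rw [show (1:ℝ) = Real.sqrt 1 by simp]
  exact Real.sqrt_le_sqrt (by exact_mod_cast hm)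

lemma aux_mul_theta (m : ℕ) (hm : 1 ≤ m) : (m : ℝ) * θ m = Real.sqrt m := by
  have h0 : (0:ℝ) < Real.sqrt m := Real.sqrt_pos.2 (by exact_mod_cast hm)
  rw [θ, mul_one_div, div_eq_iff h0.ne']
  exact (Real.mul_self_sqrt (by positivity)).symm

lemma aux_qA_chain (m : ℕ) (hm : 1 ≤ m) (a : ℕ → ℕ) (ha : ∀ i, 1 ≤ i → m ≤ a i) :
    ∀ n, 0 ≤ qA m a n ∧ 1 ≤ qA m a (n + 1) ∧ Real.sqrt m * qA m a n ≤ qA m a (n + 1) := by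
  have hs1 : 1 ≤ Real.sqrt m := aux_sqrt_ge_one m hm
  have hx : ∀ i, 1 ≤ i → Real.sqrt m ≤ (a i : ℝ) * θ m := by
    intro i hi
    calc Real.sqrt m = (m:ℝ) * θ m := (aux_mul_theta m hm).symm
    _ ≤ (a i : ℝ) * θ m := by
        apply mul_le_mul_of_nonneg_right
        · exact_mod_cast ha i hi
        · unfold θ; positivity
  intro n
  induction n with
  | zero => norm_num [qA]
  | succ n ih =>
    obtain ⟨h0, h1, h2⟩ := ih
    have hq1 : 0 ≤ qA m a (n+1) := le_trans zero_le_one h1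
    refine ⟨hq1, ?_, ?_⟩
    · show 1 ≤ qA m a (n+2)
      have := hx (n+1) (by omega)
      simp only [qA]
      nlinarith
    · show Real.sqrt m * qA m a (n+1) ≤ qA m a (n+2)
      have := hx (n+1) (by omega)
      simp only [qA]
      nlinarith

lemma aux_pA_chain (m : ℕ) (hm : 1 ≤ m) (a : ℕ → ℕ) (ha : ∀ i, 1 ≤ i → m ≤ a i) :
    ∀ n, 0 ≤ pA m a n ∧ Real.sqrt m * pA m a (n + 1) ≤ qA m a (n + 1) := by
  have hs1 : 1 ≤ Real.sqrt m := aux_sqrt_ge_one m hm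
  have hx : ∀ i, 1 ≤ i → Real.sqrt m ≤ (a i : ℝ) * θ m := by
    intro i hi
    calc Real.sqrt m = (m:ℝ) * θ m := (aux_mul_theta m hm).symm
    _ ≤ (a i : ℝ) * θ m := by
        apply mul_le_mul_of_nonneg_right
        · exact_mod_cast ha i hi
        · unfold θ; positivity
  intro n
  induction n using Nat.twoStepInduction with
  | zero => norm_num [pA, qA]
  | one =>
    refine ⟨by norm_num [pA], ?_⟩
    simp only [pA, qA]
    have := hx 1 le_rfl
    nlinarith
  | more n ih1 ih2 =>
    obtain ⟨hp0, hpq0⟩ := ih1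
    obtain ⟨hp1, hpq1⟩ := ih2
    have hq := aux_qA_chain m hm a ha
    have hth : (0:ℝ) ≤ ((a (n+2) : ℝ)) * θ m := by
      have : (0:ℝ) ≤ θ m := by unfold θ; positivity
      positivity
    constructor
    · show 0 ≤ pA m a (n+2)
      rw [aux_pA_rec]
      have hθ : (0:ℝ) ≤ θ m := by rw [θ]; positivity
      have : (0:ℝ) ≤ (a (n+1) : ℝ) * θ m := by positivity
      nlinarith
    · show Real.sqrt m * pA m a (n+3) ≤ qA m a (n+3)
      have e1 : pA m a (n+3) = (a (n+2) : ℝ) * θ m * pA m a (n+2) + pA m a (n+1) := rfl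
      have e2 : qA m a (n+3) = (a (n+2) : ℝ) * θ m * qA m a (n+2) + qA m a (n+1) := rfl
      rw [e1, e2]
      nlinarith


lemma aux_lower (s x A B C D : ℝ) (hs1 : 1 ≤ s) (hB0 : 0 ≤ B) (hD0 : 0 ≤ D)
    (hu : s * B ≤ A) (hv : s * D ≤ C) (hw : s ≤ x) :
    (x + s) / 2 * (A * C + B * D) ≤ (x * A + B) * C + A * D := by
  have hu' : 0 ≤ A - s * B := by linarith
  have hv' : 0 ≤ C - s * D := by linarith
  have hw' : 0 ≤ x - s := by linarith
  have hs0 : 0 ≤ s := by linarith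
  have key : 2 * ((x * A + B) * C + A * D) - (x + s) * (A * C + B * D) =
      (x - s) * ((A - s * B) * (C - s * D))
        + s * (x - s) * (D * (A - s * B) + B * (C - s * D))
        + 2 * (B * (C - s * D)) + 2 * ((A - s * B) * D)
        + B * D * ((x - s) * (s * s - 1) + 2 * s) := by ring
  have h1 : 0 ≤ (x - s) * ((A - s * B) * (C - s * D)) :=
    mul_nonneg hw' (mul_nonneg hu' hv')
  have h2 : 0 ≤ s * (x - s) * (D * (A - s * B) + B * (C - s * D)) :=
    mul_nonneg (mul_nonneg hs0 hw')
      (add_nonneg (mul_nonneg hD0 hu') (mul_nonneg hB0 hv'))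
  have h3 : 0 ≤ B * (C - s * D) := mul_nonneg hB0 hv'
  have h4 : 0 ≤ (A - s * B) * D := mul_nonneg hu' hD0
  have h5 : 0 ≤ B * D * ((x - s) * (s * s - 1) + 2 * s) := by
    apply mul_nonneg (mul_nonneg hB0 hD0)
    have : 0 ≤ (x - s) * (s * s - 1) := mul_nonneg hw' (by nlinarith)
    linarith
  linarith

lemma aux_upper (s x A B C D : ℝ) (hs1 : 1 ≤ s) (hB0 : 0 ≤ B) (hD0 : 0 ≤ D)
    (hu : s * B ≤ A) (hv : s * D ≤ C) (hw : s ≤ x) :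
    (x * A + B) * C + A * D ≤ (x + s) * (A * C + B * D) := by
  have hA0 : 0 ≤ A := le_trans (by nlinarith) hu
  have hC0 : 0 ≤ C := le_trans (by nlinarith) hv
  have hAB : 0 ≤ A - B := by nlinarith
  have hCD : 0 ≤ C - D := by nlinarith
  have key : (x + s) * (A * C + B * D) - ((x * A + B) * C + A * D) =
      (s - 1) * (A * C) + (x + s - 1) * (B * D) + (A - B) * (C - D) := by ring
  have h1 : 0 ≤ (s - 1) * (A * C) := mul_nonneg (by linarith) (mul_nonneg hA0 hC0)
  have h2 : 0 ≤ (x + s - 1) * (B * D) := mul_nonneg (by linarith) (mul_nonneg hB0 hD0)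
  have h3 : 0 ≤ (A - B) * (C - D) := mul_nonneg hAB hCD
  linarith

open ThetaExp in
/-- For `1 ≤ k ≤ n` and digits `a_i ≥ m`,
`((a_k + m)θ)/2 ≤ q_n(a_1, …, a_n) / q_{n−1}(a_1, …, a_{k−1}, a_{k+1}, …, a_n) ≤ (a_k + m)θ`. -/
theorem continuant_delete_ratio (m : ℕ) (hm : 1 ≤ m) (n : ℕ) (hn : 1 ≤ n) (a : ℕ → ℕ)
    (ha : ∀ i, 1 ≤ i → i ≤ n → m ≤ a i) (k : ℕ) (hk1 : 1 ≤ k) (hkn : k ≤ n) :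
    ((a k + m : ℝ) * θ m) / 2 ≤ q m a n / q m (fun i => if i < k then a i else a (i + 1)) (n - 1) ∧
    q m a n / q m (fun i => if i < k then a i else a (i + 1)) (n - 1) ≤ (a k + m : ℝ) * θ m := by
  obtain ⟨k', rfl⟩ : ∃ k', k = k' + 1 := ⟨k - 1, by omega⟩
  obtain ⟨j, hj⟩ : ∃ j, n = k' + 1 + j := ⟨n - (k' + 1), by omega⟩
  have hs1 : 1 ≤ Real.sqrt m := aux_sqrt_ge_one m hm
  have hθ0 : (0:ℝ) < θ m := by
    rw [θ]
    have : (0:ℝ) < Real.sqrt m := lt_of_lt_of_le zero_lt_one hs1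
    positivity
  have ha'm : ∀ i, 1 ≤ i → m ≤ (fun i => if i ≤ n then a i else m) i := by
    intro i hi
    simp only
    split
    · exact ha i hi ‹_›
    · exact le_rfl
  set a' : ℕ → ℕ := fun i => if i ≤ n then a i else m with ha'def
  have htm : ∀ i, 1 ≤ i → m ≤ (fun i => a' (i + (k' + 1))) i :=
    fun i hi => ha'm (i + (k' + 1)) (by omega)
  set t : ℕ → ℕ := fun i => a' (i + (k' + 1)) with htdef
  set A := qA m a' (k' + 1) with hAdef
  set B := qA m a' k' with hBdef
  set C := qA m t (j + 1) with hCdef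
  set D := pA m t (j + 1) with hDdef
  set x := ((a (k' + 1) : ℝ)) * θ m with hxdef
  set s := Real.sqrt m with hsdef
  -- numerator identity
  have hnum : q m a n = (x * A + B) * C + A * D := by
    show qA m a (n + 1) = _
    rw [aux_qA_congr m (n + 1) a a'
      (by intro i h1 h2; simp only [ha'def]; rw [if_pos (by omega)])]
    rw [show n + 1 = (k' + 1) + (j + 1) from by omega, aux_qA_split m (k' + 1) a' j]
    rw [show k' + 1 + 1 = k' + 2 from rfl, aux_qA_rec m a' k']
    have : (a' (k' + 1) : ℝ) = (a (k' + 1) : ℝ) := by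
      simp only [ha'def]; rw [if_pos (by omega)]
    rw [this, ← htdef, ← hAdef, ← hBdef, ← hCdef, ← hDdef, ← hxdef]
  -- denominator identity
  have hden : q m (fun i => if i < k' + 1 then a i else a (i + 1)) (n - 1) = A * C + B * D := by
    show qA m _ (n - 1 + 1) = _
    rw [show n - 1 + 1 = n from by omega]
    rw [aux_qA_congr m n (fun i => if i < k' + 1 then a i else a (i + 1))
      (fun i => if i < k' + 1 then a' i else a' (i + 1)) (by
        intro i h1 h2
        simp only [ha'def]
        by_cases hik : i < k' + 1
        · rw [if_pos hik, if_pos hik, if_pos (by omega)]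
        · rw [if_neg hik, if_neg hik, if_pos (by omega)])]
    rw [show n = k' + (j + 1) from by omega,
      aux_qA_split m k' (fun i => if i < k' + 1 then a' i else a' (i + 1)) j]
    rw [aux_qA_congr m (k' + 1) (fun i => if i < k' + 1 then a' i else a' (i + 1)) a'
        (by intro i h1 h2; rw [if_pos (by omega)]),
      aux_qA_congr m k' (fun i => if i < k' + 1 then a' i else a' (i + 1)) a'
        (by intro i h1 h2; rw [if_pos (by omega)]),
      aux_qA_congr m (j + 1) (fun i => (fun i => if i < k' + 1 then a' i else a' (i + 1)) (i + k')) t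
        (by intro i h1 h2; simp only [htdef]; rw [if_neg (by omega)]; congr 1 <;> omega),
      aux_pA_congr m (j + 1) (fun i => (fun i => if i < k' + 1 then a' i else a' (i + 1)) (i + k')) t
        (by intro i h1 h2; simp only [htdef]; rw [if_neg (by omega)]; congr 1 <;> omega)]
  -- inequalities on the pieces
  obtain ⟨hB0, hA1, hsBA⟩ := aux_qA_chain m hm a' ha'm k'
  obtain ⟨-, hC1, -⟩ := aux_qA_chain m hm t htm j
  obtain ⟨hD0, -⟩ := aux_pA_chain m hm t htm (j + 1)
  obtain ⟨-, hsDC⟩ := aux_pA_chain m hm t htm j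
  rw [← hBdef] at hB0
  rw [← hAdef] at hA1
  rw [← hsdef, ← hBdef, ← hAdef] at hsBA
  rw [← hCdef] at hC1
  rw [← hDdef] at hD0
  rw [← hsdef, ← hDdef, ← hCdef] at hsDC
  have hxs : s ≤ x := by
    rw [hxdef, hsdef, ← aux_mul_theta m hm]
    apply mul_le_mul_of_nonneg_right _ (le_of_lt hθ0)
    exact_mod_cast ha (k' + 1) (by omega) (by omega)
  have hsum : ((a (k' + 1) : ℝ) + m) * θ m = x + s := by
    rw [add_mul, ← hxdef, aux_mul_theta m hm, ← hsdef]
  clear_value A B C D x s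
  have hdenpos : 0 < A * C + B * D := by nlinarith
  rw [hnum, hden, hsum]
  constructor
  · rw [le_div_iff₀ hdenpos]
    exact aux_lower s x A B C D hs1 hB0 hD0 hsBA hsDC hxs
  · rw [div_le_iff₀ hdenpos]
    exact aux_upper s x A B C D hs1 hB0 hD0 hsBA hsDC hxs
end
end

section
/- Fix a real s ∈ (0,1) and an integer M ≥ m. If for every n ≥ 1 and all integers a_1, …, a_{n−1} with m ≤ a_i ≤ M (i = 1, …, n−1) one has |I_{n−1}(a_1, …, a_{n−1})|^s ≥ Σ_{k=m}^{M} |I_n(a_1, …, a_{n−1}, k)|^s, then dim_H(E_M) ≤ s. -/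
open Filter Set

noncomputable section

namespace DimAux

open ThetaExp MeasureTheory

lemma theta_pos {m : ℕ} (hm : 1 ≤ m) : 0 < θ m := by
  have h0 : (0:ℝ) < Real.sqrt m := Real.sqrt_pos.2 (by exact_mod_cast Nat.pos_of_ne_zero (by omega))
  simpa [θ] using one_div_pos.2 h0

lemma theta_le_one {m : ℕ} (hm : 1 ≤ m) : θ m ≤ 1 := by
  have hm1 : (1:ℝ) ≤ (m:ℝ) := by exact_mod_cast hm
  have hs : Real.sqrt m * Real.sqrt m = m := Real.mul_self_sqrt (by positivity)
  have h1 : (1:ℝ) ≤ Real.sqrt m := by nlinarith [Real.sqrt_nonneg (m:ℝ)]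
  rw [θ, div_le_one (by linarith)]
  linarith

lemma theta_sq {m : ℕ} (hm : 1 ≤ m) : θ m * θ m = 1 / m := by
  rw [θ, div_mul_div_comm, one_mul, Real.mul_self_sqrt (by positivity)]

lemma key {m : ℕ} (hm : 1 ≤ m) {x : ℝ} (hdig : m ≤ digit m 1 x) :
    0 < x ∧ x ≤ θ m ∧ T m x = 1 / x - θ m * (digit m 1 x) ∧
      0 ≤ T m x ∧ T m x < θ m ∧ x * T m x ≤ 1 / 2 := by
  have hθ : 0 < θ m := theta_pos hm
  have hθ1 : θ m ≤ 1 := theta_le_one hm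
  have hθsq : θ m * θ m = 1 / m := theta_sq hm
  have hd : digit m 1 x = ⌊1 / (x * θ m)⌋₊ := rfl
  set u : ℝ := 1 / (x * θ m) with hu
  have hdm : m ≤ ⌊u⌋₊ := hd ▸ hdig
  have h1u : (1:ℝ) ≤ u := by
    by_contra hlt
    push_neg at hlt
    have h0 : ⌊u⌋₊ = 0 := Nat.floor_eq_zero.2 hlt
    omega
  have hu0 : (0:ℝ) < u := by linarith
  have hxθ : 0 < x * θ m := by
    by_contra hc
    push_neg at hc
    have h2 : (1:ℝ) / (x * θ m) ≤ 0 := div_nonpos_of_nonneg_of_nonpos zero_le_one hc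
    rw [← hu] at h2
    linarith
  have hx : 0 < x := by
    by_contra hc
    push_neg at hc
    nlinarith
  have hxu : x * θ m = 1 / u := by rw [hu, one_div_one_div]
  have hflr : (⌊u⌋₊ : ℝ) ≤ u := Nat.floor_le hu0.le
  have hfru : u < ⌊u⌋₊ + 1 := Nat.lt_floor_add_one u
  have hmu : (m : ℝ) ≤ u := le_trans (by exact_mod_cast hdm) hflr
  have hm1 : (1:ℝ) ≤ (m:ℝ) := by exact_mod_cast hm
  have hxθle : x * θ m ≤ θ m * θ m := by
    rw [hxu, hθsq]
    exact one_div_le_one_div_of_le (by linarith) hmu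
  have hxle : x ≤ θ m := by nlinarith
  have hinv : 1 / x = θ m * u := by
    rw [hu]
    field_simp
  have hT : T m x = 1 / x - θ m * (digit m 1 x) := by
    rw [T, if_neg hx.ne', hd]
    rw [← natCast_floor_eq_intCast_floor hu0.le]
  have ha1 : (1:ℝ) ≤ (digit m 1 x : ℝ) := by
    have h1 : 1 ≤ digit m 1 x := le_trans hm hdig
    exact_mod_cast h1
  have hau : (digit m 1 x : ℝ) ≤ u := by rw [hd]; exact hflr
  have hua : u < (digit m 1 x : ℝ) + 1 := by rw [hd]; exact hfru
  have hT0 : 0 ≤ T m x := by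
    rw [hT, hinv]
    nlinarith
  have hTθ : T m x < θ m := by
    rw [hT, hinv]
    nlinarith
  have hxT : x * T m x ≤ 1 / 2 := by
    rw [hT]
    have hx1 : x * (1 / x) = 1 := by field_simp
    have haxθ : x * (θ m * (digit m 1 x : ℝ)) = (digit m 1 x : ℝ) / u := by
      calc x * (θ m * (digit m 1 x : ℝ)) = (x * θ m) * (digit m 1 x : ℝ) := by ring
        _ = (digit m 1 x : ℝ) / u := by rw [hxu]; ring
    have hrw : x * (1 / x - θ m * (digit m 1 x : ℝ))
        = 1 - (digit m 1 x : ℝ) / u := by rw [mul_sub, hx1, haxθ]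
    rw [hrw]
    have h2 : u ≤ 2 * (digit m 1 x : ℝ) := by linarith
    have h3 : (1:ℝ)/2 ≤ (digit m 1 x : ℝ) / u := by
      rw [div_le_div_iff₀ (by norm_num) hu0]
      linarith
    linarith
  exact ⟨hx, hxle, hT, hT0, hTθ, hxT⟩

lemma diff {m : ℕ} (hm : 1 ≤ m) {x y : ℝ} (hdx : m ≤ digit m 1 x)
    (hxy : digit m 1 x = digit m 1 y) :
    |x - y| = x * y * |T m x - T m y| := by
  obtain ⟨hx, -, hTx, -, -, -⟩ := key hm hdx
  obtain ⟨hy, -, hTy, -, -, -⟩ := key hm (hxy ▸ hdx)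
  have hid : x - y = x * y * (T m y - T m x) := by
    rw [hTx, hTy, ← hxy]
    have hsimp : (1 / y - θ m * (digit m 1 x : ℝ)) - (1 / x - θ m * (digit m 1 x : ℝ))
        = 1 / y - 1 / x := by ring
    rw [hsimp]
    field_simp
  rw [hid, abs_mul, abs_of_nonneg (by positivity : (0:ℝ) ≤ x * y), abs_sub_comm]

lemma digit_two {m : ℕ} (x : ℝ) : digit m 1 (T m x) = digit m 2 x := rfl

lemma digit_shift {m i : ℕ} (hi : 1 ≤ i) (x : ℝ) :
    digit m i (T m (T m x)) = digit m (i + 2) x := by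
  have h22 : (T m)^[2] x = T m (T m x) := rfl
  have h2 : (T m)^[i - 1] (T m (T m x)) = (T m)^[i + 2 - 1] x := by
    rw [show i + 2 - 1 = (i - 1) + 2 from by omega, Function.iterate_add_apply, h22]
  unfold digit
  rw [h2]

lemma contract {m : ℕ} (hm : 1 ≤ m) :
    ∀ j : ℕ, ∀ x y : ℝ, x ∈ Set.Icc 0 (θ m) → y ∈ Set.Icc 0 (θ m) →
      (∀ i, 1 ≤ i → i ≤ 2 * j → digit m i x = digit m i y ∧ m ≤ digit m i x) →
      |x - y| ≤ θ m * (1 / 2) ^ j := by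
  intro j
  induction j with
  | zero =>
    intro x y hx hy _
    rw [pow_zero, mul_one, abs_sub_le_iff]
    exact ⟨by linarith [hx.1, hx.2, hy.1, hy.2], by linarith [hx.1, hx.2, hy.1, hy.2]⟩
  | succ j ih =>
    intro x y hx hy hd
    have h1 := hd 1 le_rfl (by omega)
    have h2 := hd 2 (by omega) (by omega)
    obtain ⟨hx0, hxθ, hTx, hTx0, hTxθ, hxTx⟩ := key hm h1.2
    obtain ⟨hy0, hyθ, hTy, hTy0, hTyθ, hyTy⟩ := key hm (h1.1 ▸ h1.2)
    have hdx2 : m ≤ digit m 1 (T m x) := by rw [digit_two]; exact h2.2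
    have hdy2 : m ≤ digit m 1 (T m y) := by rw [digit_two, ← h2.1]; exact h2.2
    have hdxy2 : digit m 1 (T m x) = digit m 1 (T m y) := by
      rw [digit_two, digit_two]; exact h2.1
    obtain ⟨hTx0', -, -, hTTx0, hTTxθ, hTxTTx⟩ := key hm hdx2
    obtain ⟨hTy0', -, -, hTTy0, hTTyθ, hTyTTy⟩ := key hm hdy2
    have e1 : |x - y| = x * y * |T m x - T m y| := diff hm h1.2 h1.1
    have e2 : |T m x - T m y| = T m x * T m y * |T m (T m x) - T m (T m y)| :=
      diff hm hdx2 hdxy2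
    have hIH : |T m (T m x) - T m (T m y)| ≤ θ m * (1 / 2) ^ j := by
      apply ih _ _ ⟨hTTx0, hTTxθ.le⟩ ⟨hTTy0, hTTyθ.le⟩
      intro i hi1 hij
      rw [digit_shift hi1, digit_shift hi1]
      exact ⟨(hd (i + 2) (by omega) (by omega)).1, (hd (i + 2) (by omega) (by omega)).2⟩
    have hθ1 : θ m ≤ 1 := theta_le_one hm
    set D := |T m (T m x) - T m (T m y)| with hDdef
    have hD0 : 0 ≤ D := abs_nonneg _
    have hyTy1 : y * T m y ≤ 1 := by nlinarith
    have hyTy0 : 0 ≤ y * T m y := by positivity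
    calc |x - y| = (x * T m x) * ((y * T m y) * D) := by rw [e1, e2]; ring
      _ ≤ (1/2) * ((y * T m y) * D) :=
          mul_le_mul_of_nonneg_right hxTx (mul_nonneg hyTy0 hD0)
      _ ≤ (1/2) * D := by nlinarith
      _ ≤ (1/2) * (θ m * (1/2) ^ j) := by linarith
      _ = θ m * (1/2) ^ (j + 1) := by ring

lemma cyl_subset {m n : ℕ} (a : ℕ → ℕ) : cyl m n a ⊆ Set.Ioo 0 (θ m) := fun _ hx => hx.1.1

lemma cyl_bounded {m n : ℕ} (a : ℕ → ℕ) : Bornology.IsBounded (cyl m n a) :=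
  (Metric.isBounded_Icc 0 (θ m)).subset ((cyl_subset a).trans Set.Ioo_subset_Icc_self)

lemma diam_cyl_le_theta {m n : ℕ} (hm : 1 ≤ m) (a : ℕ → ℕ) :
    Metric.diam (cyl m n a) ≤ θ m := by
  have h := Metric.diam_mono ((cyl_subset (m := m) (n := n) a).trans Set.Ioo_subset_Icc_self)
    (Metric.isBounded_Icc 0 (θ m))
  rwa [Real.diam_Icc (theta_pos hm).le, sub_zero] at h

lemma cyl_congr {m n : ℕ} {a b : ℕ → ℕ} (hab : ∀ i, 1 ≤ i → i ≤ n → a i = b i) :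
    cyl m n a = cyl m n b := by
  ext x
  constructor
  · exact fun h => ⟨h.1, fun i h1 h2 => by rw [← hab i h1 h2]; exact h.2 i h1 h2⟩
  · exact fun h => ⟨h.1, fun i h1 h2 => by rw [hab i h1 h2]; exact h.2 i h1 h2⟩

lemma diam_cyl {m : ℕ} (hm : 1 ≤ m) (N : ℕ) (a : ℕ → ℕ)
    (ha : ∀ i, 1 ≤ i → i ≤ 2 * N → m ≤ a i) :
    Metric.diam (cyl m (2 * N) a) ≤ θ m * (1 / 2) ^ N := by
  have hθ := theta_pos (m := m) hm
  apply Metric.diam_le_of_forall_dist_le (by positivity)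
  intro x hx y hy
  rw [Real.dist_eq]
  apply contract hm N x y
    ⟨(cyl_subset a hx).1.le, (cyl_subset a hx).2.le⟩
    ⟨(cyl_subset a hy).1.le, (cyl_subset a hy).2.le⟩
  intro i h1 h2
  rw [hx.2 i h1 h2, hy.2 i h1 h2]
  exact ⟨rfl, ha i h1 h2⟩

/-- Extension of a finite word to a digit sequence. -/
noncomputable def aw {m M N : ℕ} (w : Fin N → ↥(Finset.Icc m M)) : ℕ → ℕ :=
  fun i => if h : i - 1 < N then (w ⟨i - 1, h⟩ : ℕ) else m

lemma aw_mem {m M N : ℕ} (w : Fin N → ↥(Finset.Icc m M)) :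
    ∀ i, 1 ≤ i → i ≤ N → m ≤ aw w i ∧ aw w i ≤ M := by
  intro i h1 h2
  have hlt : i - 1 < N := by omega
  simp only [aw, dif_pos hlt]
  exact Finset.mem_Icc.1 (w ⟨i - 1, hlt⟩).2

lemma sum_le {m M : ℕ} (hm : 1 ≤ m) {s : ℝ} (hs0 : 0 < s)
    (h : ∀ n : ℕ, 1 ≤ n → ∀ a : ℕ → ℕ,
      (∀ i, 1 ≤ i → i ≤ n - 1 → m ≤ a i ∧ a i ≤ M) →
      ∑ k ∈ Finset.Icc m M, Metric.diam (cyl m n (Function.update a n k)) ^ s ≤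
        Metric.diam (cyl m (n - 1) a) ^ s) :
    ∀ N : ℕ, ∑ w : Fin N → ↥(Finset.Icc m M),
      Metric.diam (cyl m N (aw w)) ^ s ≤ θ m ^ s := by
  intro N
  induction N with
  | zero =>
    rw [Fintype.sum_unique]
    exact Real.rpow_le_rpow Metric.diam_nonneg (diam_cyl_le_theta hm _) hs0.le
  | succ N ih =>
    have step : ∀ w : Fin N → ↥(Finset.Icc m M),
        ∑ k : ↥(Finset.Icc m M),
          Metric.diam (cyl m (N + 1) (aw (Fin.snoc w k))) ^ s ≤
        Metric.diam (cyl m N (aw w)) ^ s := by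
      intro w
      have hcongr : ∀ k : ↥(Finset.Icc m M),
          cyl m (N + 1) (aw (Fin.snoc w k)) =
            cyl m (N + 1) (Function.update (aw w) (N + 1) (k : ℕ)) := by
        intro k
        apply cyl_congr
        intro i h1 h2
        by_cases hi : i = N + 1
        · subst hi
          rw [Function.update_self]
          have hlt : N + 1 - 1 < N + 1 := by omega
          simp only [aw, dif_pos hlt]
          rw [show (⟨N + 1 - 1, hlt⟩ : Fin (N + 1)) = Fin.last N from rfl, Fin.snoc_last]
        · have hiN : i - 1 < N := by omega
          rw [Function.update_of_ne hi]
          have hlt1 : i - 1 < N + 1 := by omega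
          simp only [aw, dif_pos hlt1, dif_pos hiN]
          rw [show (⟨i - 1, hlt1⟩ : Fin (N + 1)) = Fin.castSucc ⟨i - 1, hiN⟩ from rfl,
            Fin.snoc_castSucc]
      calc ∑ k : ↥(Finset.Icc m M),
            Metric.diam (cyl m (N + 1) (aw (Fin.snoc w k))) ^ s
          = ∑ k : ↥(Finset.Icc m M),
            Metric.diam (cyl m (N + 1) (Function.update (aw w) (N + 1) (k : ℕ))) ^ s :=
            Finset.sum_congr rfl fun k _ => by rw [hcongr k]
        _ = ∑ k ∈ Finset.Icc m M,
            Metric.diam (cyl m (N + 1) (Function.update (aw w) (N + 1) k)) ^ s :=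
            Finset.sum_coe_sort (Finset.Icc m M)
              (fun k => Metric.diam (cyl m (N + 1) (Function.update (aw w) (N + 1) k)) ^ s)
        _ ≤ Metric.diam (cyl m (N + 1 - 1) (aw w)) ^ s :=
            h (N + 1) (by omega) (aw w) (fun i h1 h2 => aw_mem w i h1 (by omega))
        _ = Metric.diam (cyl m N (aw w)) ^ s := by norm_num
    calc ∑ w : Fin (N + 1) → ↥(Finset.Icc m M), Metric.diam (cyl m (N + 1) (aw w)) ^ s
        = ∑ p : ↥(Finset.Icc m M) × (Fin N → ↥(Finset.Icc m M)),
            Metric.diam (cyl m (N + 1) (aw (Fin.snoc p.2 p.1))) ^ s :=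
          (Equiv.sum_comp (Fin.snocEquiv (fun _ => ↥(Finset.Icc m M)))
            (fun w => Metric.diam (cyl m (N + 1) (aw w)) ^ s)).symm
      _ = ∑ k : ↥(Finset.Icc m M), ∑ w : Fin N → ↥(Finset.Icc m M),
            Metric.diam (cyl m (N + 1) (aw (Fin.snoc w k))) ^ s := Fintype.sum_prod_type _
      _ = ∑ w : Fin N → ↥(Finset.Icc m M), ∑ k : ↥(Finset.Icc m M),
            Metric.diam (cyl m (N + 1) (aw (Fin.snoc w k))) ^ s := Finset.sum_comm
      _ ≤ ∑ w : Fin N → ↥(Finset.Icc m M), Metric.diam (cyl m N (aw w)) ^ s :=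
          Finset.sum_le_sum fun w _ => step w
      _ ≤ θ m ^ s := ih

lemma cover {m M : ℕ} (N : ℕ) :
    EM m M ⊆ ⋃ w : Fin N → ↥(Finset.Icc m M), cyl m N (aw w) := by
  intro x hx
  have hw : ∀ i : Fin N, digit m (i.val + 1) x ∈ Finset.Icc m M := fun i =>
    Finset.mem_Icc.2 ⟨(hx.2 (i.val + 1) (by omega)).1, (hx.2 (i.val + 1) (by omega)).2⟩
  refine Set.mem_iUnion.2 ⟨fun i => ⟨digit m (i.val + 1) x, hw i⟩, hx.1, ?_⟩
  intro i h1 h2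
  have hlt : i - 1 < N := by omega
  simp only [aw, dif_pos hlt]
  show digit m i x = digit m (i - 1 + 1) x
  rw [Nat.sub_add_cancel h1]

lemma ediam_cyl_eq {m n : ℕ} (a : ℕ → ℕ) :
    EMetric.diam (cyl m n a) = ENNReal.ofReal (Metric.diam (cyl m n a)) :=
  (ENNReal.ofReal_toReal (cyl_bounded a).ediam_ne_top).symm

lemma main {m M : ℕ} (hm : 1 ≤ m) {s : ℝ} (hs0 : 0 < s)
    (h : ∀ n : ℕ, 1 ≤ n → ∀ a : ℕ → ℕ,
      (∀ i, 1 ≤ i → i ≤ n - 1 → m ≤ a i ∧ a i ≤ M) →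
      ∑ k ∈ Finset.Icc m M, Metric.diam (cyl m n (Function.update a n k)) ^ s ≤
        Metric.diam (cyl m (n - 1) a) ^ s) :
    dimH (EM m M) ≤ ENNReal.ofReal s := by
  classical
  have hθ : 0 < θ m := theta_pos hm
  set r : ℕ → ENNReal := fun N => ENNReal.ofReal (θ m * (1 / 2) ^ N) with hr_def
  have hr : Tendsto r atTop (nhds 0) := by
    have h0 : Tendsto (fun N : ℕ => θ m * (1 / 2 : ℝ) ^ N) atTop (nhds (θ m * 0)) :=
      (tendsto_pow_atTop_nhds_zero_of_lt_one (by norm_num) (by norm_num)).const_mul _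
    rw [mul_zero] at h0
    simpa [hr_def] using ENNReal.tendsto_ofReal h0
  have hdiam : ∀ N : ℕ, ∀ w : Fin (2 * N) → ↥(Finset.Icc m M),
      EMetric.diam (cyl m (2 * N) (aw w)) ≤ r N := by
    intro N w
    rw [ediam_cyl_eq]
    exact ENNReal.ofReal_le_ofReal
      (diam_cyl hm N (aw w) (fun i h1 h2 => (aw_mem w i h1 h2).1))
  have hmain := MeasureTheory.Measure.hausdorffMeasure_le_liminf_sum s (EM m M) r hr
      (fun N w => cyl m (2 * N) (aw w)) (Filter.Eventually.of_forall hdiam)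
      (Filter.Eventually.of_forall (fun N => cover (2 * N)))
  have hsum : ∀ N : ℕ, (∑ w : Fin (2 * N) → ↥(Finset.Icc m M),
      EMetric.diam (cyl m (2 * N) (aw w)) ^ s) ≤ ENNReal.ofReal (θ m ^ s) := by
    intro N
    have hterm : ∀ w : Fin (2 * N) → ↥(Finset.Icc m M),
        EMetric.diam (cyl m (2 * N) (aw w)) ^ s
          = ENNReal.ofReal (Metric.diam (cyl m (2 * N) (aw w)) ^ s) := fun w => by
      rw [ediam_cyl_eq, ENNReal.ofReal_rpow_of_nonneg Metric.diam_nonneg hs0.le]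
    rw [Finset.sum_congr rfl (fun w _ => hterm w),
      ← ENNReal.ofReal_sum_of_nonneg (fun w _ => Real.rpow_nonneg Metric.diam_nonneg s)]
    exact ENNReal.ofReal_le_ofReal (sum_le hm hs0 h (2 * N))
  have hlim : μH[s] (EM m M) ≤ ENNReal.ofReal (θ m ^ s) := by
    refine hmain.trans ?_
    refine le_trans (Filter.liminf_le_liminf (Filter.Eventually.of_forall hsum)) ?_
    simp [Filter.liminf_const]
  have hne : μH[((s.toNNReal : NNReal) : ℝ)] (EM m M) ≠ ⊤ := by
    rw [Real.coe_toNNReal s hs0.le]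
    exact (hlim.trans_lt ENNReal.ofReal_lt_top).ne
  have hd := dimH_le_of_hausdorffMeasure_ne_top hne
  simpa [ENNReal.ofReal] using hd

end DimAux

open ThetaExp in
/-- If for every `n ≥ 1` and all digits `a_1, …, a_{n−1}` in `[m, M]` one has
`|I_{n−1}(a_1, …, a_{n−1})|^s ≥ Σ_{k=m}^{M} |I_n(a_1, …, a_{n−1}, k)|^s`,
then `dim_H(E_M) ≤ s`. -/
theorem dimH_EM_le_of_sum (m M : ℕ) (hm : 1 ≤ m) (hM : m ≤ M)
    (s : ℝ) (hs0 : 0 < s) (hs1 : s < 1)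
    (h : ∀ n : ℕ, 1 ≤ n → ∀ a : ℕ → ℕ,
      (∀ i, 1 ≤ i → i ≤ n - 1 → m ≤ a i ∧ a i ≤ M) →
      ∑ k ∈ Finset.Icc m M, Metric.diam (cyl m n (Function.update a n k)) ^ s ≤
        Metric.diam (cyl m (n - 1) a) ^ s) :
    dimH (EM m M) ≤ ENNReal.ofReal s := by
  exact DimAux.main hm hs0 h
end
end

section
/- For every n ≥ 1 and every sequence (a_1, …, a_n) of integers with a_i ≥ m for all i, the diameter of the fundamental interval satisfies θ/((1 + θ²) q_n²) ≤ |I_n(a_1, …, a_n)| ≤ θ/q_n². -/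
open Filter Set

noncomputable section

namespace ThetaExp

-- auxiliary lemmas
section Aux
variable {m : ℕ}

variable {m : ℕ}

lemma theta_pos (hm : 1 ≤ m) : 0 < θ m := by
  have : (0:ℝ) < Real.sqrt m := Real.sqrt_pos.mpr (by exact_mod_cast Nat.pos_of_ne_zero (by omega))
  exact div_pos one_pos this

lemma m_theta_sq (hm : 1 ≤ m) : (m : ℝ) * θ m ^ 2 = 1 := by
  have h0 : (0:ℝ) ≤ (m:ℝ) := by positivity
  have hs : Real.sqrt m ^ 2 = m := Real.sq_sqrt h0
  have hs0 : Real.sqrt m ≠ 0 := by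
    have : (0:ℝ) < Real.sqrt m := Real.sqrt_pos.mpr (by exact_mod_cast Nat.pos_of_ne_zero (by omega))
    exact ne_of_gt this
  have hm0 : (m:ℝ) ≠ 0 := by positivity
  rw [θ, div_pow, one_pow, hs]
  field_simp

lemma one_le_m_theta (hm : 1 ≤ m) {b : ℕ} (hb : m ≤ b) : 1 ≤ (b:ℝ) * θ m := by
  have h1 := m_theta_sq hm
  have hθ := theta_pos hm
  have hmb : (m:ℝ) ≤ b := by exact_mod_cast hb
  have hθ1 : θ m ≤ 1 := by nlinarith [hθ, h1, (by exact_mod_cast hm : (1:ℝ) ≤ m)]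
  nlinarith [hθ, h1]



lemma det_pq (a : ℕ → ℕ) : ∀ k, pA m a k * qA m a (k+1) - pA m a (k+1) * qA m a k = (-1)^k := by
  intro k
  induction k with
  | zero => simp [pA, qA]
  | succ k ih =>
    have hp : pA m a (k+2) = (a (k+1) : ℝ) * θ m * pA m a (k+1) + pA m a k := rfl
    have hq : qA m a (k+2) = (a (k+1) : ℝ) * θ m * qA m a (k+1) + qA m a k := rfl
    rw [hp, hq, pow_succ]
    ring_nf
    ring_nf at ih
    linarith [ih]

lemma qA_nonneg (a : ℕ → ℕ) : ∀ k, 0 ≤ qA m a k := by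
  intro k
  induction k using Nat.strong_induction_on with
  | _ k ih =>
    match k with
    | 0 => simp [qA]
    | 1 => simp [qA]
    | (k+2) =>
      have h1 := ih (k+1) (by omega)
      have h0 := ih k (by omega)
      have : qA m a (k+2) = (a (k+1) : ℝ) * θ m * qA m a (k+1) + qA m a k := rfl
      rw [this]
      have hθ : 0 ≤ θ m := by
        rw [θ]; positivity
      positivity

lemma pA_nonneg (a : ℕ → ℕ) : ∀ k, 0 ≤ pA m a k := by
  intro k
  induction k using Nat.strong_induction_on with
  | _ k ih =>
    match k with
    | 0 => simp [pA]
    | 1 => simp [pA]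
    | (k+2) =>
      have h1 := ih (k+1) (by omega)
      have h0 := ih k (by omega)
      have : pA m a (k+2) = (a (k+1) : ℝ) * θ m * pA m a (k+1) + pA m a k := rfl
      rw [this]
      have hθ : 0 ≤ θ m := by rw [θ]; positivity
      positivity

lemma qA_one_le (hm : 1 ≤ m) (a : ℕ → ℕ) {n : ℕ} (ha : ∀ i, 1 ≤ i → i ≤ n → m ≤ a i) :
    ∀ k, k ≤ n → 1 ≤ qA m a (k+1) := by
  intro k
  induction k with
  | zero => intro _; simp [qA]
  | succ k ih =>
    intro hk
    have h1 : 1 ≤ qA m a (k+1) := ih (by omega)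
    have h0 : 0 ≤ qA m a k := qA_nonneg (m := m) a k
    have hb : 1 ≤ (a (k+1) : ℝ) * θ m := one_le_m_theta hm (ha (k+1) (by omega) (by omega))
    have : qA m a (k+2) = (a (k+1) : ℝ) * θ m * qA m a (k+1) + qA m a k := rfl
    rw [this]
    nlinarith

lemma qA_le_theta (hm : 1 ≤ m) (a : ℕ → ℕ) {n : ℕ} (ha : ∀ i, 1 ≤ i → i ≤ n → m ≤ a i) :
    ∀ k, k ≤ n → qA m a k ≤ θ m * qA m a (k+1) := by
  intro k hk
  have hθ := theta_pos hm
  match k with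
  | 0 => simp [qA]; positivity
  | (k+1) =>
    have h0 := qA_nonneg (m := m) a k
    have h1 := qA_nonneg (m := m) a (k+1)
    have hrec : qA m a (k+2) = (a (k+1) : ℝ) * θ m * qA m a (k+1) + qA m a k := rfl
    have hb : 1 ≤ (a (k+1) : ℝ) * θ m := one_le_m_theta hm (ha (k+1) (by omega) (by omega))
    -- θ * qA (k+2) = a θ² qA(k+1) + θ qA k ≥ qA (k+1)
    have hmθ := m_theta_sq hm
    have ham : (m:ℝ) ≤ a (k+1) := by exact_mod_cast ha (k+1) (by omega) (by omega)
    rw [hrec]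
    have : 1 ≤ (a (k+1):ℝ) * θ m * θ m := by nlinarith [sq_nonneg (θ m)]
    nlinarith

lemma shift_pq (a : ℕ → ℕ) :
    ∀ k, pA m a (k+1) = qA m (fun i => a (i+1)) k ∧
      qA m a (k+1) = (a 1 : ℝ) * θ m * qA m (fun i => a (i+1)) k + pA m (fun i => a (i+1)) k := by
  have key : ∀ k, (pA m a (k+1) = qA m (fun i => a (i+1)) k ∧
      qA m a (k+1) = (a 1 : ℝ) * θ m * qA m (fun i => a (i+1)) k + pA m (fun i => a (i+1)) k) ∧
      (pA m a (k+2) = qA m (fun i => a (i+1)) (k+1) ∧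
      qA m a (k+2) = (a 1 : ℝ) * θ m * qA m (fun i => a (i+1)) (k+1) + pA m (fun i => a (i+1)) (k+1)) := by
    intro k
    induction k with
    | zero =>
      refine ⟨⟨by simp [pA, qA], by simp [pA, qA]⟩, ⟨by simp [pA, qA], by simp [pA, qA]⟩⟩
    | succ k ih =>
      refine ⟨ih.2, ?_, ?_⟩
      · have hp : pA m a (k+3) = (a (k+2) : ℝ) * θ m * pA m a (k+2) + pA m a (k+1) := rfl
        have hq : qA m (fun i => a (i+1)) (k+2)
            = (a (k+2) : ℝ) * θ m * qA m (fun i => a (i+1)) (k+1) + qA m (fun i => a (i+1)) k := rfl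
        rw [hp, hq, ih.2.1, ih.1.1]
      · have hq : qA m a (k+3) = (a (k+2) : ℝ) * θ m * qA m a (k+2) + qA m a (k+1) := rfl
        have hq' : qA m (fun i => a (i+1)) (k+2)
            = (a (k+2) : ℝ) * θ m * qA m (fun i => a (i+1)) (k+1) + qA m (fun i => a (i+1)) k := rfl
        have hp' : pA m (fun i => a (i+1)) (k+2)
            = (a (k+2) : ℝ) * θ m * pA m (fun i => a (i+1)) (k+1) + pA m (fun i => a (i+1)) k := rfl
        rw [hq, hq', hp', ih.2.2, ih.1.2]
        ring
  exact fun k => (key k).1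


lemma digit_one (x : ℝ) : digit m 1 x = ⌊1 / (x * θ m)⌋₊ := rfl

lemma digit_zero_eq (hm : 1 ≤ m) : digit m 1 (0:ℝ) = 0 := by
  simp [digit]

lemma digit_succ' {i : ℕ} (hi : 1 ≤ i) (x : ℝ) : digit m (i+1) x = digit m i (T m x) := by
  obtain ⟨j, rfl⟩ := Nat.exists_eq_add_of_le hi
  show ⌊1 / ((T m)^[1 + j + 1 - 1] x * θ m)⌋₊ = ⌊1 / ((T m)^[1 + j - 1] (T m x) * θ m)⌋₊
  have h1 : 1 + j + 1 - 1 = j + 1 := by omega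
  have h2 : 1 + j - 1 = j := by omega
  rw [h1, h2, Function.iterate_succ_apply]

lemma step_forward (hm : 1 ≤ m) {x : ℝ} (hx0 : 0 < x) (hxθ : x < θ m) :
    0 ≤ T m x ∧ T m x < θ m ∧ x * ((digit m 1 x : ℝ) * θ m + T m x) = 1 := by
  have hθ := theta_pos hm
  set r : ℝ := 1 / (x * θ m) with hr
  have hrpos : 0 < r := by positivity
  have hb : digit m 1 x = ⌊r⌋₊ := rfl
  have hif : ((⌊r⌋ : ℤ) : ℝ) = ((⌊r⌋₊ : ℕ) : ℝ) := by
    rw [← Int.natCast_floor_eq_floor (le_of_lt hrpos)]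
    norm_num
  have hT : T m x = 1 / x - θ m * ⌊r⌋₊ := by
    rw [T, if_neg (ne_of_gt hx0), hif]
  have hfl : (⌊r⌋₊ : ℝ) ≤ r := Nat.floor_le (le_of_lt hrpos)
  have hfl2 : r < ⌊r⌋₊ + 1 := Nat.lt_floor_add_one r
  have hxr : θ m * r = 1 / x := by
    rw [hr]; field_simp
  refine ⟨?_, ?_, ?_⟩
  · rw [hT, ← hxr]; nlinarith
  · rw [hT, ← hxr]; nlinarith
  · rw [hb, hT]
    field_simp
    ring

lemma forward (hm : 1 ≤ m) :
    ∀ n : ℕ, ∀ a : ℕ → ℕ, (∀ i, 1 ≤ i → i ≤ n → 1 ≤ a i) →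
    ∀ x : ℝ, 0 ≤ x → x < θ m → (∀ i, 1 ≤ i → i ≤ n → digit m i x = a i) →
    ∃ t, 0 ≤ t ∧ t < θ m ∧
      x * (qA m a (n+1) + t * qA m a n) = pA m a (n+1) + t * pA m a n := by
  intro n
  induction n with
  | zero =>
    intro a _ x hx0 hxθ _
    exact ⟨x, hx0, hxθ, by simp [pA, qA]⟩
  | succ n ih =>
    intro a ha x hx0 hxθ hd
    have hx0' : 0 < x := by
      rcases lt_or_eq_of_le hx0 with h | h
      · exact h
      · exfalso
        have h1 : digit m 1 x = a 1 := hd 1 le_rfl (by omega)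
        rw [← h, digit_zero_eq hm] at h1
        have := ha 1 le_rfl (by omega)
        omega
    obtain ⟨hT0, hTθ, hx1⟩ := step_forward hm hx0' hxθ
    set a' : ℕ → ℕ := fun i => a (i+1) with ha'
    have hd' : ∀ i, 1 ≤ i → i ≤ n → digit m i (T m x) = a' i := by
      intro i hi hin
      rw [← digit_succ' hi x]
      exact hd (i+1) (by omega) (by omega)
    obtain ⟨s, hs0, hsθ, hkey⟩ := ih a' (fun i hi hin => ha (i+1) (by omega) (by omega))
      (T m x) hT0 hTθ hd'
    refine ⟨s, hs0, hsθ, ?_⟩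
    have h1 : x * ((a 1 : ℝ) * θ m + T m x) = 1 := by
      rw [← hd 1 le_rfl (by omega)]; exact hx1
    have sh1 := shift_pq (m := m) a (n+1)
    have sh0 := shift_pq (m := m) a n
    rw [sh1.1, sh0.1, sh1.2, sh0.2]
    linear_combination (qA m a' (n+1) + s * qA m a' n) * h1 - x * hkey

lemma backward (hm : 1 ≤ m) :
    ∀ n : ℕ, ∀ a : ℕ → ℕ, (∀ i, 1 ≤ i → i ≤ n → m ≤ a i) →
    ∀ t : ℝ, 0 < t → t < θ m →
    (pA m a (n+1) + t * pA m a n) / (qA m a (n+1) + t * qA m a n) ∈ Set.Ioo 0 (θ m) ∧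
    ∀ i, 1 ≤ i → i ≤ n →
      digit m i ((pA m a (n+1) + t * pA m a n) / (qA m a (n+1) + t * qA m a n)) = a i := by
  intro n
  induction n with
  | zero =>
    intro a _ t ht0 htθ
    constructor
    · simpa [pA, qA] using Set.mem_Ioo.mpr ⟨ht0, htθ⟩
    · intro i hi hin; omega
  | succ n ih =>
    intro a ha t ht0 htθ
    have hθ := theta_pos hm
    set a' : ℕ → ℕ := fun i => a (i+1) with ha'def
    have ha' : ∀ i, 1 ≤ i → i ≤ n → m ≤ a' i := fun i hi hin => ha (i+1) (by omega) (by omega)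
    obtain ⟨hyIoo, hyd⟩ := ih a' ha' t ht0 htθ
    set Qn : ℝ := qA m a' (n+1) + t * qA m a' n with hQn
    set Pn : ℝ := pA m a' (n+1) + t * pA m a' n with hPn
    set y : ℝ := Pn / Qn with hy
    have hQpos : 0 < Qn := by
      have h1 : 1 ≤ qA m a' (n+1) := qA_one_le hm a' ha' n le_rfl
      have h0 : 0 ≤ qA m a' n := qA_nonneg (m := m) a' n
      have := le_of_lt ht0
      rw [hQn]; nlinarith
    have hyQ : y * Qn = Pn := by
      rw [hy]; field_simp
    have hy0 : 0 < y := hyIoo.1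
    have hyθ : y < θ m := hyIoo.2
    -- x = 1/(a1 θ + y)
    have ha1 : 1 ≤ (a 1 : ℝ) * θ m := one_le_m_theta hm (ha 1 le_rfl (by omega))
    have hden : 0 < (a 1 : ℝ) * θ m + y := by nlinarith
    set x : ℝ := 1 / ((a 1 : ℝ) * θ m + y) with hxdef
    have sh1 := shift_pq (m := m) a (n+1)
    have sh0 := shift_pq (m := m) a n
    have hPx : pA m a (n+2) + t * pA m a (n+1) = Qn := by
      rw [sh1.1, sh0.1]
    have hQx : qA m a (n+2) + t * qA m a (n+1) = ((a 1 : ℝ) * θ m + y) * Qn := by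
      rw [sh1.2, sh0.2]
      have : y * Qn = Pn := hyQ
      rw [hPn] at this
      linear_combination -this
    have hxeq : (pA m a (n+2) + t * pA m a (n+1)) / (qA m a (n+2) + t * qA m a (n+1)) = x := by
      rw [hPx, hQx, hxdef]
      rw [div_eq_div_iff (by positivity) (by positivity)]
      ring
    have hx0 : 0 < x := by rw [hxdef]; positivity
    have ham : (m : ℝ) ≤ (a 1 : ℕ) := by exact_mod_cast ha 1 le_rfl (by omega)
    have hmθ := m_theta_sq hm
    have hxθ : x < θ m := by
      rw [hxdef, div_lt_iff₀ hden]
      nlinarith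
    have hr : 1 / (x * θ m) = (a 1 : ℝ) + y / θ m := by
      rw [hxdef]
      field_simp
    have hd1 : digit m 1 x = a 1 := by
      rw [digit_one, hr]
      have h0 : (0:ℝ) ≤ (a 1 : ℝ) + y / θ m := by positivity
      rw [Nat.floor_eq_iff h0]
      constructor
      · nlinarith [div_nonneg (le_of_lt hy0) (le_of_lt hθ)]
      · have : y / θ m < 1 := (div_lt_one hθ).mpr hyθ
        push_cast
        linarith
    have hTx : T m x = y := by
      rw [T, if_neg (ne_of_gt hx0)]
      have hif : ((⌊1 / (x * θ m)⌋ : ℤ) : ℝ) = ((a 1 : ℕ) : ℝ) := by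
        rw [← Int.natCast_floor_eq_floor (by rw [hr]; positivity)]
        rw [← digit_one (m := m) x, hd1]
        norm_num
      rw [hif]
      have hone : 1 / x = (a 1 : ℝ) * θ m + y := by
        rw [hxdef]; field_simp
      rw [hone]; ring
    refine ⟨by rw [hxeq]; exact ⟨hx0, hxθ⟩, ?_⟩
    intro i hi hin
    rw [hxeq]
    match i, hi with
    | 1, _ => exact hd1
    | (j+2), _ =>
      have hj : 1 ≤ j + 1 := by omega
      rw [digit_succ' hj x, hTx]
      exact hyd (j+1) hj (by omega)

end Aux

end ThetaExp

open ThetaExp in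
/-- For every `n ≥ 1` and digits `a_i ≥ m`,
`θ/((1 + θ²) q_n²) ≤ |I_n(a_1, …, a_n)| ≤ θ/q_n²`. -/
theorem cyl_diam_bounds (m : ℕ) (hm : 1 ≤ m) (n : ℕ) (hn : 1 ≤ n) (a : ℕ → ℕ)
    (ha : ∀ i, 1 ≤ i → i ≤ n → m ≤ a i) :
    θ m / ((1 + θ m ^ 2) * q m a n ^ 2) ≤ Metric.diam (cyl m n a) ∧
    Metric.diam (cyl m n a) ≤ θ m / q m a n ^ 2 := by
  classical
  have hθ := theta_pos hm
  have hmθ := m_theta_sq hm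
  simp only [q]
  set p1 := pA m a (n+1) with hp1d
  set p0 := pA m a n with hp0d
  set q1 := qA m a (n+1) with hq1d
  set q0 := qA m a n with hq0d
  have hq1 : 1 ≤ q1 := qA_one_le hm a ha n le_rfl
  have hq1pos : 0 < q1 := by linarith
  have hq0 : 0 ≤ q0 := qA_nonneg (m := m) a n
  have hq0' : q0 ≤ θ m * q1 := qA_le_theta hm a ha n le_rfl
  have hdet : p0 * q1 - p1 * q0 = (-1:ℝ)^n := det_pq (m := m) a n
  have hsq : q1^2 = q1*q1 := sq q1
  constructor
  · -- LOWER BOUND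
    set f : ℝ → ℝ := fun t => (p1 + t*p0)/(q1 + t*q0) with hf
    have hDen : ∀ t : ℝ, 0 ≤ t → 0 < q1 + t*q0 := by
      intro t ht; nlinarith
    have hInj : Set.InjOn f (Set.Icc 0 (θ m)) := by
      intro t ht s hs heq
      rw [hf] at heq
      simp only at heq
      rw [div_eq_div_iff (ne_of_gt (hDen t ht.1)) (ne_of_gt (hDen s hs.1))] at heq
      have h2 : (t - s) * (-1:ℝ)^n = 0 := by
        linear_combination heq - (t - s) * hdet
      rcases mul_eq_zero.mp h2 with h | h
      · linarith [sub_eq_zero.mp h]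
      · exact absurd h (pow_ne_zero n (by norm_num))
    set C : Set ℝ := {t ∈ Set.Icc 0 (θ m) | ¬ Irrational (f t)} with hC
    have hCc : C.Countable := by
      apply Set.MapsTo.countable_of_injOn (t := Set.range ((↑) : ℚ → ℝ))
        (fun t ht => ?_) (hInj.mono (Set.sep_subset _ _)) (Set.countable_range _)
      have h2 := ht.2
      rw [Irrational, not_not] at h2
      exact h2
    have hdense : Dense Cᶜ := hCc.dense_compl ℝ
    set S : Set ℝ := {t ∈ Set.Ioo 0 (θ m) | Irrational (f t)} with hS
    have hsubcyl : f '' S ⊆ cyl m n a := by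
      rintro _ ⟨t, ⟨htI, htirr⟩, rfl⟩
      obtain ⟨hIoo, hdig⟩ := backward hm n a ha t htI.1 htI.2
      rw [← hp1d, ← hp0d, ← hq1d, ← hq0d] at hIoo hdig
      exact ⟨⟨hIoo, htirr⟩, hdig⟩
    have hclo : ∀ z ∈ Set.Icc 0 (θ m), z ∈ closure S := by
      intro z hz
      rw [Metric.mem_closure_iff]
      intro ε hε
      set lo := max 0 (z - ε) with hlo
      set hi := min (θ m) (z + ε) with hhi
      have hlh : lo < hi :=
        max_lt (lt_min hθ (by linarith [hz.1])) (lt_min (by linarith [hz.2]) (by linarith))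
      obtain ⟨t, htc, htU⟩ := hdense.exists_mem_open isOpen_Ioo (Set.nonempty_Ioo.mpr hlh)
      have ht0 : 0 < t := lt_of_le_of_lt (le_max_left 0 (z - ε)) htU.1
      have htθ : t < θ m := lt_of_lt_of_le htU.2 (min_le_left _ _)
      have htirr : Irrational (f t) := by
        by_contra h
        exact htc ⟨⟨le_of_lt ht0, le_of_lt htθ⟩, h⟩
      refine ⟨t, ⟨⟨ht0, htθ⟩, htirr⟩, ?_⟩
      rw [Real.dist_eq, abs_lt]
      constructor
      · have := lt_of_lt_of_le htU.2 (min_le_right _ _); linarith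
      · have := lt_of_le_of_lt (le_max_right 0 (z - ε)) htU.1; linarith
    have hScl : closure S ⊆ Set.Icc 0 (θ m) := by
      apply closure_minimal _ isClosed_Icc
      exact fun t ht => ⟨le_of_lt ht.1.1, le_of_lt ht.1.2⟩
    have hcont : ContinuousOn f (Set.Icc 0 (θ m)) := by
      apply ContinuousOn.div
      · exact (by continuity : Continuous fun t : ℝ => p1 + t*p0).continuousOn
      · exact (by continuity : Continuous fun t : ℝ => q1 + t*q0).continuousOn
      · exact fun t ht => ne_of_gt (hDen t ht.1)
    have himg : f '' (closure S) ⊆ closure (f '' S) :=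
      (hcont.mono hScl).image_closure
    have hf0 : f 0 ∈ closure (f '' S) :=
      himg ⟨0, hclo 0 ⟨le_rfl, le_of_lt hθ⟩, rfl⟩
    have hfθ : f (θ m) ∈ closure (f '' S) :=
      himg ⟨θ m, hclo (θ m) ⟨le_of_lt hθ, le_rfl⟩, rfl⟩
    have hbdd : Bornology.IsBounded (cyl m n a) :=
      (Metric.isBounded_Ioo 0 (θ m)).subset (fun x hx => hx.1.1)
    have hbdd2 : Bornology.IsBounded (closure (f '' S)) :=
      (hbdd.subset hsubcyl).closure
    have hD : 0 < q1 + θ m * q0 := hDen (θ m) (le_of_lt hθ)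
    have h00 : f 0 * q1 = p1 := by
      rw [hf]; simp only; rw [zero_mul, add_zero, zero_mul, add_zero]
      field_simp
    have h11 : f (θ m) * (q1 + θ m * q0) = p1 + θ m * p0 := by
      rw [hf]; simp only
      rw [mul_comm (θ m) p0, mul_comm (θ m) q0]
      exact div_mul_cancel₀ _ (by rw [mul_comm q0 (θ m)]; exact ne_of_gt hD)
    have hval : (f 0 - f (θ m)) * (q1 * (q1 + θ m * q0)) = -(θ m * (-1:ℝ)^n) := by
      linear_combination (q1 + θ m * q0) * h00 - q1 * h11 - θ m * hdet
    have habs1 : |(-1:ℝ)^n| = 1 := by rw [abs_pow, abs_neg, abs_one, one_pow]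
    have habs : |f 0 - f (θ m)| * (q1 * (q1 + θ m * q0)) = θ m := by
      have h := congrArg abs hval
      simp only [abs_mul, abs_neg, habs1, mul_one,
        abs_of_pos (by positivity : (0:ℝ) < q1 * (q1 + θ m * q0)),
        abs_of_pos hθ] at h
      exact h
    have hdist : dist (f 0) (f (θ m)) = θ m / (q1 * (q1 + θ m * q0)) := by
      rw [Real.dist_eq, eq_div_iff (by positivity)]
      exact habs
    calc θ m / ((1 + θ m ^ 2) * q1 ^ 2) ≤ θ m / (q1 * (q1 + θ m * q0)) := by
          apply div_le_div_of_nonneg_left (le_of_lt hθ) (by positivity)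
          nlinarith
      _ = dist (f 0) (f (θ m)) := hdist.symm
      _ ≤ Metric.diam (closure (f '' S)) := Metric.dist_le_diam_of_mem hbdd2 hf0 hfθ
      _ = Metric.diam (f '' S) := Metric.diam_closure _
      _ ≤ Metric.diam (cyl m n a) := Metric.diam_mono hsubcyl hbdd
  · -- UPPER BOUND
    apply Metric.diam_le_of_forall_dist_le (by positivity)
    intro x hx y hy
    obtain ⟨⟨hxI, hxirr⟩, hxd⟩ := hx
    obtain ⟨⟨hyI, hyirr⟩, hyd⟩ := hy
    have ha1 : ∀ i, 1 ≤ i → i ≤ n → 1 ≤ a i := fun i h1 h2 => le_trans hm (ha i h1 h2)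
    obtain ⟨t, ht0, htθ, hxt⟩ := forward hm n a ha1 x (le_of_lt hxI.1) hxI.2 hxd
    obtain ⟨s, hs0, hsθ, hys⟩ := forward hm n a ha1 y (le_of_lt hyI.1) hyI.2 hyd
    rw [← hp1d, ← hp0d, ← hq1d, ← hq0d] at hxt hys
    have hDt : q1 ≤ q1 + t*q0 := le_add_of_nonneg_right (mul_nonneg ht0 hq0)
    have hDs : q1 ≤ q1 + s*q0 := le_add_of_nonneg_right (mul_nonneg hs0 hq0)
    have hDtpos : 0 < q1 + t*q0 := by linarith
    have hDspos : 0 < q1 + s*q0 := by linarith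
    have key : (x - y) * ((q1 + t*q0) * (q1 + s*q0)) = (t - s) * (-1:ℝ)^n := by
      linear_combination (q1 + s*q0) * hxt - (q1 + t*q0) * hys + (t - s) * hdet
    have habs1 : |(-1:ℝ)^n| = 1 := by rw [abs_pow, abs_neg, abs_one, one_pow]
    have habs : |x - y| * ((q1 + t*q0) * (q1 + s*q0)) = |t - s| := by
      have h := congrArg abs key
      simp only [abs_mul, habs1, mul_one,
        abs_of_pos (by positivity : (0:ℝ) < (q1 + t*q0) * (q1 + s*q0))] at h
      exact h
    have hts : |t - s| ≤ θ m := by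
      rw [abs_sub_le_iff]; constructor <;> linarith
    rw [Real.dist_eq, le_div_iff₀ (by positivity)]
    have hmul : q1 * q1 ≤ (q1 + t*q0) * (q1 + s*q0) :=
      mul_le_mul hDt hDs (by linarith) (by linarith)
    calc |x - y| * q1 ^ 2 = |x - y| * (q1 * q1) := by rw [hsq]
      _ ≤ |x - y| * ((q1 + t*q0) * (q1 + s*q0)) :=
          mul_le_mul_of_nonneg_left hmul (abs_nonneg _)
      _ = |t - s| := habs
      _ ≤ θ m := hts
end
end

section
/- For every integer M ≥ m and every η > 0, the set E_M(η) is contained in E(η). -/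
open Filter Set

noncomputable section

section Helpers
open Real

lemma sqrt_tendsto_atTop : Tendsto Real.sqrt atTop atTop := by
  apply tendsto_atTop_atTop_of_monotone (fun a b h => Real.sqrt_le_sqrt h)
  intro b
  exact ⟨(max b 0)^2, by rw [Real.sqrt_sq (le_max_right _ _)]; exact le_max_left _ _⟩

lemma loglog_tendsto_atTop : Tendsto (fun n : ℕ => Real.log (Real.log n)) atTop atTop :=
  (Real.tendsto_log_atTop.comp Real.tendsto_log_atTop).comp tendsto_natCast_atTop_atTop

lemma log_div_self_tendsto : Tendsto (fun x : ℝ => Real.log x / x) atTop (nhds 0) :=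
  Real.isLittleO_log_id_atTop.tendsto_div_nhds_zero

-- L2
lemma loglog_div_self_tendsto : Tendsto (fun n : ℕ => Real.log (Real.log n) / n) atTop (nhds 0) := by
  have h1 : Tendsto (fun n : ℕ => Real.log n / n) atTop (nhds 0) :=
    log_div_self_tendsto.comp tendsto_natCast_atTop_atTop
  apply tendsto_of_tendsto_of_tendsto_of_le_of_le' tendsto_const_nhds h1
  · filter_upwards [eventually_ge_atTop 3] with n hn
    have h3 : (3:ℝ) ≤ (n:ℝ) := by exact_mod_cast hn
    have hlog : 1 ≤ Real.log n := by
      rw [Real.le_log_iff_exp_le (by linarith)]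
      linarith [Real.exp_one_lt_d9]
    exact div_nonneg (Real.log_nonneg hlog) (by linarith)
  · filter_upwards [eventually_ge_atTop 3] with n hn
    have h3 : (3:ℝ) ≤ (n:ℝ) := by exact_mod_cast hn
    have hlog : 0 ≤ Real.log n := Real.log_nonneg (by linarith)
    have : Real.log (Real.log n) ≤ Real.log n := Real.log_le_self hlog
    have hn0 : (0:ℝ) < n := by linarith
    gcongr

-- L3
lemma loglog_div_sqrt_tendsto :
    Tendsto (fun n : ℕ => Real.log (Real.log n) / Real.sqrt n) atTop (nhds 0) := by
  have h1 : Tendsto (fun n : ℕ => 2 * (Real.log (Real.sqrt n) / Real.sqrt n)) atTop (nhds 0) := by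
    have := (log_div_self_tendsto.comp
      (sqrt_tendsto_atTop.comp tendsto_natCast_atTop_atTop)).const_mul (2:ℝ)
    simpa using this
  apply tendsto_of_tendsto_of_tendsto_of_le_of_le' tendsto_const_nhds h1
  · filter_upwards [eventually_ge_atTop 3] with n hn
    have h3 : (3:ℝ) ≤ (n:ℝ) := by exact_mod_cast hn
    have hlog : 1 ≤ Real.log n := by
      rw [Real.le_log_iff_exp_le (by linarith)]
      linarith [Real.exp_one_lt_d9]
    have : (0:ℝ) ≤ Real.sqrt n := Real.sqrt_nonneg _
    exact div_nonneg (Real.log_nonneg hlog) this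
  · filter_upwards [eventually_ge_atTop 3] with n hn
    have h3 : (3:ℝ) ≤ (n:ℝ) := by exact_mod_cast hn
    have hs : Real.log (Real.sqrt n) = Real.log n / 2 := Real.log_sqrt (by linarith)
    have hlog : 0 ≤ Real.log n := Real.log_nonneg (by linarith)
    have h2 : Real.log (Real.log n) ≤ Real.log n := Real.log_le_self hlog
    have hsq : (0:ℝ) < Real.sqrt n := Real.sqrt_pos.2 (by linarith)
    rw [hs]
    have key : 2 * (Real.log (n:ℝ) / 2 / Real.sqrt n) = Real.log n / Real.sqrt n := by
      field_simp
    rw [key]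
    gcongr

-- L4 core
lemma div_sub_const_tendsto (c : ℝ) :
    Tendsto (fun t : ℝ => t / (t - c)) atTop (nhds 1) := by
  have h1 : Tendsto (fun t : ℝ => 1 + c / (t - c)) atTop (nhds 1) := by
    have : Tendsto (fun t : ℝ => t - c) atTop atTop := tendsto_atTop_add_const_right _ _ tendsto_id
    simpa using (tendsto_const_nhds (α := ℝ) (x := (1:ℝ))).add
      (Tendsto.div_atTop tendsto_const_nhds this)
  apply h1.congr'
  filter_upwards [eventually_gt_atTop (c + 1)] with t ht
  have : t - c ≠ 0 := by linarith
  field_simp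
  ring

-- facts about Nat.sqrt vs Real.sqrt
lemma natSqrt_cast_le (n : ℕ) : ((Nat.sqrt n : ℝ)) ≤ Real.sqrt n := by
  rw [Real.le_sqrt (Nat.cast_nonneg _) (Nat.cast_nonneg _)]
  exact_mod_cast Nat.sqrt_le' n

lemma sqrt_lt_natSqrt_add_one (n : ℕ) : Real.sqrt n < (Nat.sqrt n : ℝ) + 1 := by
  rw [Real.sqrt_lt' (by positivity)]
  exact_mod_cast Nat.lt_succ_sqrt' n

-- L5
lemma natSqrt_sq_div_tendsto :
    Tendsto (fun n : ℕ => ((Nat.sqrt n : ℝ))^2 / n) atTop (nhds 1) := by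
  have hlow : Tendsto (fun n : ℕ => 1 - 2 / Real.sqrt n) atTop (nhds 1) := by
    have : Tendsto (fun n : ℕ => 2 / Real.sqrt n) atTop (nhds 0) :=
      Tendsto.div_atTop tendsto_const_nhds (sqrt_tendsto_atTop.comp tendsto_natCast_atTop_atTop)
    simpa using (tendsto_const_nhds (x := (1:ℝ))).sub this
  apply tendsto_of_tendsto_of_tendsto_of_le_of_le' hlow tendsto_const_nhds
  · filter_upwards [eventually_ge_atTop 16] with n hn
    have h16 : (16:ℝ) ≤ (n:ℝ) := by exact_mod_cast hn
    have hn0 : (0:ℝ) < n := by linarith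
    have hrt : (4:ℝ) ≤ Real.sqrt n := by
      rw [Real.le_sqrt (by norm_num) (Nat.cast_nonneg _)]; nlinarith
    have h1 : Real.sqrt n - 1 ≤ (Nat.sqrt n : ℝ) := by
      linarith [sqrt_lt_natSqrt_add_one n]
    have h2 : (Real.sqrt n - 1)^2 ≤ ((Nat.sqrt n : ℝ))^2 := by
      apply pow_le_pow_left₀ (by linarith) h1
    have hsq : Real.sqrt n ^ 2 = (n:ℝ) := Real.sq_sqrt (le_of_lt hn0)
    have hsqpos : (0:ℝ) < Real.sqrt n := by linarith
    have hdiv : 2 / Real.sqrt n * (n:ℝ) = 2 * Real.sqrt n := by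
      rw [div_mul_eq_mul_div, div_eq_iff (ne_of_gt hsqpos)]; nlinarith
    rw [le_div_iff₀ hn0, sub_mul, one_mul, hdiv]
    nlinarith
  · filter_upwards [eventually_ge_atTop 1] with n hn
    have hn0 : (0:ℝ) < n := by exact_mod_cast hn
    rw [div_le_one hn0]
    exact_mod_cast Nat.sqrt_le' n

lemma loglog_natSqrt_sq_bounds : ∀ᶠ n : ℕ in atTop,
    Real.log (Real.log (n:ℝ)) - Real.log 2 ≤ Real.log (Real.log (((Nat.sqrt n:ℝ))^2)) ∧
    Real.log (Real.log (((Nat.sqrt n:ℝ))^2)) ≤ Real.log (Real.log (n:ℝ)) ∧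
    Real.log 2 < Real.log (Real.log (n:ℝ)) ∧
    0 < Real.log (Real.log (((Nat.sqrt n:ℝ))^2)) := by
  filter_upwards [eventually_ge_atTop 256] with n hn
  set sr : ℝ := (Nat.sqrt n : ℝ) with hsr
  have h256 : (256:ℝ) ≤ (n:ℝ) := by exact_mod_cast hn
  have hn0 : (0:ℝ) < n := by linarith
  have hrt : (16:ℝ) ≤ Real.sqrt n := by
    rw [Real.le_sqrt (by norm_num) (Nat.cast_nonneg _)]; nlinarith
  have hs1 : Real.sqrt n - 1 ≤ sr := by linarith [sqrt_lt_natSqrt_add_one n]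
  have hs2 : Real.sqrt n / 2 ≤ sr := by linarith
  have hsqn : Real.sqrt n ^ 2 = (n:ℝ) := Real.sq_sqrt (le_of_lt hn0)
  have hsr4 : (n:ℝ)/4 ≤ sr^2 := by nlinarith
  have hsrpos : (0:ℝ) < sr := by linarith
  have hlog2 : (0:ℝ) < Real.log 2 := Real.log_pos (by norm_num)
  have hlogn : 8 * Real.log 2 ≤ Real.log n := by
    have : Real.log (256:ℝ) ≤ Real.log n := Real.log_le_log (by norm_num) h256
    have h2 : Real.log (256:ℝ) = 8 * Real.log 2 := by
      rw [show (256:ℝ) = 2^8 by norm_num, Real.log_pow]; push_cast; ring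
    linarith
  have hlogn2 : (2:ℝ) < Real.log n := by nlinarith [Real.log_two_gt_d9]
  have hlogsr : Real.log n - 2 * Real.log 2 ≤ Real.log (sr^2) := by
    have : Real.log ((n:ℝ)/4) ≤ Real.log (sr^2) := Real.log_le_log (by linarith) hsr4
    have h4 : Real.log ((n:ℝ)/4) = Real.log n - 2 * Real.log 2 := by
      rw [Real.log_div (ne_of_gt hn0) (by norm_num),
        show (4:ℝ) = 2^2 by norm_num, Real.log_pow]; push_cast; ring
    linarith
  have hlogsr2 : Real.log n / 2 ≤ Real.log (sr^2) := by linarith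
  have hlogsrpos : (0:ℝ) < Real.log (sr^2) := by linarith
  have hsrle : sr^2 ≤ (n:ℝ) := by rw [hsr]; exact_mod_cast Nat.sqrt_le' n
  have hub : Real.log (Real.log (sr^2)) ≤ Real.log (Real.log n) := by
    apply Real.log_le_log hlogsrpos
    exact Real.log_le_log (by positivity) hsrle
  have hlb : Real.log (Real.log (n:ℝ)) - Real.log 2 ≤ Real.log (Real.log (sr^2)) := by
    have h1 : Real.log (Real.log (n:ℝ) / 2) ≤ Real.log (Real.log (sr^2)) :=
      Real.log_le_log (by linarith) hlogsr2
    have h2 : Real.log (Real.log (n:ℝ) / 2) = Real.log (Real.log (n:ℝ)) - Real.log 2 :=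
      Real.log_div (by linarith) (by norm_num)
    linarith
  have hll2 : Real.log 2 < Real.log (Real.log (n:ℝ)) :=
    Real.log_lt_log (by norm_num) hlogn2
  exact ⟨hlb, hub, hll2, by linarith⟩

-- L6
lemma loglog_ratio_tendsto : Tendsto (fun n : ℕ =>
    Real.log (Real.log (n:ℝ)) / Real.log (Real.log (((Nat.sqrt n:ℝ))^2))) atTop (nhds 1) := by
  have hup : Tendsto (fun n : ℕ =>
      Real.log (Real.log n) / (Real.log (Real.log n) - Real.log 2)) atTop (nhds 1) :=
    (div_sub_const_tendsto (Real.log 2)).comp loglog_tendsto_atTop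
  apply tendsto_of_tendsto_of_tendsto_of_le_of_le' tendsto_const_nhds hup
  · filter_upwards [loglog_natSqrt_sq_bounds] with n ⟨hlb, hub, hll2, hpos⟩
    rw [one_le_div hpos]
    exact hub
  · filter_upwards [loglog_natSqrt_sq_bounds] with n ⟨hlb, hub, hll2, hpos⟩
    have h0 : (0:ℝ) ≤ Real.log (Real.log (n:ℝ)) := by linarith [Real.log_pos (show (1:ℝ)<2 by norm_num)]
    gcongr

end Helpers

set_option maxHeartbeats 1000000 in
open ThetaExp in
/-- For every integer `M ≥ m` and every `η > 0`, `E_M(η) ⊆ E(η)`. -/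
theorem EMeta_subset_Eset (m M : ℕ) (hm : 1 ≤ m) (hM : m ≤ M) (η : ℝ) (hη : 0 < η) :
    EMeta m M η ⊆ Eset m η := by
  intro x hx
  obtain ⟨hΩ, hsq, hns⟩ := hx
  refine ⟨hΩ, ?_⟩
  have hc : (0:ℝ) < Real.log (Real.log 4) := by
    apply Real.log_pos
    rw [show (4:ℝ) = 2^2 by norm_num, Real.log_pow]
    push_cast
    nlinarith [Real.log_two_gt_d9]
  set c : ℝ := Real.log (Real.log 4) with hcdef
  set l : ℕ → ℝ := fun n =>
    (η * ((Nat.sqrt n : ℝ))^2 / Real.log (Real.log (((Nat.sqrt n : ℝ))^2)) - 1) *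
      Real.log (Real.log n) / n with hldef
  set u : ℕ → ℝ := fun n =>
    ((M:ℝ) + η * Real.sqrt n / c + η * n / Real.log (Real.log (Real.sqrt n))) *
      Real.log (Real.log n) / n with hudef
  have hl : Tendsto l atTop (nhds η) := by
    have h1 : Tendsto (fun n : ℕ =>
        η * (((Nat.sqrt n : ℝ))^2 / n) *
          (Real.log (Real.log n) / Real.log (Real.log (((Nat.sqrt n : ℝ))^2))) -
          Real.log (Real.log n) / n) atTop (nhds (η * 1 * 1 - 0)) :=
      ((tendsto_const_nhds.mul natSqrt_sq_div_tendsto).mul loglog_ratio_tendsto).sub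
        loglog_div_self_tendsto
    rw [show η * 1 * 1 - 0 = η by ring] at h1
    apply h1.congr'
    filter_upwards [loglog_natSqrt_sq_bounds, eventually_ge_atTop 1] with n hb hn1
    obtain ⟨hlb, hub, hll2, hpos⟩ := hb
    have hn0 : ((n:ℝ)) ≠ 0 := ne_of_gt (by exact_mod_cast Nat.lt_of_lt_of_le Nat.zero_lt_one hn1)
    have hD : Real.log (Real.log (((Nat.sqrt n : ℝ))^2)) ≠ 0 := ne_of_gt hpos
    simp only [hldef]
    have gen1 : ∀ (A S L N D : ℝ), D ≠ 0 → N ≠ 0 →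
        A*(S/N)*(L/D) - L/N = (A*S/D - 1)*L/N := by
      intro A S L N D hD' hN'; field_simp
    exact gen1 _ _ _ _ _ hD hn0
  have hu : Tendsto u atTop (nhds η) := by
    have h2 : Tendsto (fun n : ℕ =>
        (M:ℝ) * (Real.log (Real.log n) / n) +
          (η / c) * (Real.log (Real.log n) / Real.sqrt n) +
          η * (Real.log (Real.log n) / (Real.log (Real.log n) - Real.log 2)))
        atTop (nhds ((M:ℝ) * 0 + (η / c) * 0 + η * 1)) :=
      ((tendsto_const_nhds.mul loglog_div_self_tendsto).add
        (tendsto_const_nhds.mul loglog_div_sqrt_tendsto)).add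
        (tendsto_const_nhds.mul
          ((div_sub_const_tendsto (Real.log 2)).comp loglog_tendsto_atTop))
    rw [show (M:ℝ) * 0 + (η / c) * 0 + η * 1 = η by ring] at h2
    apply h2.congr'
    filter_upwards [eventually_ge_atTop 256] with n hn
    have h256 : (256:ℝ) ≤ (n:ℝ) := by exact_mod_cast hn
    have hn0 : (0:ℝ) < n := by linarith
    have hlog2 : (0:ℝ) < Real.log 2 := Real.log_pos (by norm_num)
    have hlogn : 8 * Real.log 2 ≤ Real.log n := by
      have h1 : Real.log (256:ℝ) ≤ Real.log n := Real.log_le_log (by norm_num) h256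
      have h2' : Real.log (256:ℝ) = 8 * Real.log 2 := by
        rw [show (256:ℝ) = 2^8 by norm_num, Real.log_pow]; push_cast; ring
      linarith
    have hlogn2 : (2:ℝ) < Real.log n := by nlinarith [Real.log_two_gt_d9]
    have hrtpos : (0:ℝ) < Real.sqrt n := Real.sqrt_pos.2 hn0
    have hlsqrt : Real.log (Real.sqrt n) = Real.log n / 2 := Real.log_sqrt (le_of_lt hn0)
    have hllsqrt : Real.log (Real.log (Real.sqrt n)) =
        Real.log (Real.log n) - Real.log 2 := by
      rw [hlsqrt, Real.log_div (by linarith) (by norm_num)]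
    have hll2 : Real.log 2 < Real.log (Real.log (n:ℝ)) :=
      Real.log_lt_log (by norm_num) hlogn2
    have hDpos : (0:ℝ) < Real.log (Real.log (n:ℝ)) - Real.log 2 := by linarith
    have hmul : Real.sqrt n * Real.sqrt n = (n:ℝ) := Real.mul_self_sqrt (le_of_lt hn0)
    simp only [hudef, hllsqrt]
    have gen2 : ∀ (Mv e cv r L d N : ℝ), cv ≠ 0 → r ≠ 0 → d ≠ 0 → N = r*r →
        Mv*(L/N) + (e/cv)*(L/r) + e*(L/d) = (Mv + e*r/cv + e*N/d) * L / N := by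
      intro Mv e cv r L d N hcv' hr' hd' hN'; subst hN'; field_simp
    exact gen2 _ _ _ _ _ _ _ (ne_of_gt hc) (ne_of_gt hrtpos) (ne_of_gt hDpos) hmul.symm
  apply tendsto_of_tendsto_of_tendsto_of_le_of_le' hl hu
  · -- l n ≤ F n eventually
    filter_upwards [eventually_ge_atTop 256, loglog_natSqrt_sq_bounds] with n hn hb
    obtain ⟨hlb, hub, hll2, hpos⟩ := hb
    have hn0 : (0:ℝ) < n := by
      have : (256:ℝ) ≤ (n:ℝ) := by exact_mod_cast hn
      linarith
    have hll0 : (0:ℝ) ≤ Real.log (Real.log n) := by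
      have : (0:ℝ) < Real.log 2 := Real.log_pos (by norm_num)
      linarith
    have hs2 : 2 ≤ Nat.sqrt n := by
      rw [Nat.le_sqrt']; omega
    have hmem : Nat.sqrt n ^ 2 ∈ Finset.Icc 1 n := by
      rw [Finset.mem_Icc]
      exact ⟨Nat.one_le_iff_ne_zero.2 (by positivity), Nat.sqrt_le' n⟩
    have hle : digit m (Nat.sqrt n ^ 2) x ≤ Lmax m n x :=
      Finset.le_sup (f := fun i => digit m i x) hmem
    have hdig := hsq (Nat.sqrt n) hs2
    have hfloor : η * ((Nat.sqrt n : ℝ))^2 / Real.log (Real.log (((Nat.sqrt n : ℝ))^2)) - 1 ≤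
        (Lmax m n x : ℝ) := by
      have h1 := Nat.sub_one_lt_floor
        (η * ((Nat.sqrt n : ℝ))^2 / Real.log (Real.log (((Nat.sqrt n : ℝ))^2)))
      have h2 : (digit m (Nat.sqrt n ^ 2) x : ℝ) ≤ (Lmax m n x : ℝ) := by exact_mod_cast hle
      rw [hdig] at h2
      push_cast at h2 ⊢
      linarith
    simp only [hldef]
    gcongr
  · -- F n ≤ u n eventually
    filter_upwards [eventually_ge_atTop 256] with n hn
    have h256 : (256:ℝ) ≤ (n:ℝ) := by exact_mod_cast hn
    have hn0 : (0:ℝ) < n := by linarith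
    have hlog2 : (0:ℝ) < Real.log 2 := Real.log_pos (by norm_num)
    have hlogn : 8 * Real.log 2 ≤ Real.log n := by
      have h1 : Real.log (256:ℝ) ≤ Real.log n := Real.log_le_log (by norm_num) h256
      have h2' : Real.log (256:ℝ) = 8 * Real.log 2 := by
        rw [show (256:ℝ) = 2^8 by norm_num, Real.log_pow]; push_cast; ring
      linarith
    have hlogn2 : (2:ℝ) < Real.log n := by nlinarith [Real.log_two_gt_d9]
    have hll0 : (0:ℝ) ≤ Real.log (Real.log n) :=
      Real.log_nonneg (by linarith)
    have hrt16 : (16:ℝ) ≤ Real.sqrt n := by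
      rw [Real.le_sqrt (by norm_num) (Nat.cast_nonneg _)]; nlinarith
    have hrtpos : (0:ℝ) < Real.sqrt n := by linarith
    have hlogrt : (1:ℝ) < Real.log (Real.sqrt n) := by
      have h1 : Real.log (16:ℝ) ≤ Real.log (Real.sqrt n) :=
        Real.log_le_log (by norm_num) hrt16
      have h2' : Real.log (16:ℝ) = 4 * Real.log 2 := by
        rw [show (16:ℝ) = 2^4 by norm_num, Real.log_pow]; push_cast; ring
      nlinarith [Real.log_two_gt_d9]
    have hllrt : (0:ℝ) < Real.log (Real.log (Real.sqrt n)) := Real.log_pos hlogrt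
    have hlog4 : (1:ℝ) < Real.log 4 := by
      rw [show (4:ℝ) = 2^2 by norm_num, Real.log_pow]
      push_cast
      nlinarith [Real.log_two_gt_d9]
    have key : (Lmax m n x : ℝ) ≤
        (M:ℝ) + η * Real.sqrt n / c + η * n / Real.log (Real.log (Real.sqrt n)) := by
      obtain ⟨i, hi, hsup⟩ := Finset.exists_mem_eq_sup (Finset.Icc 1 n)
        ⟨1, Finset.mem_Icc.2 ⟨le_refl 1, by omega⟩⟩ (fun i => digit m i x)
      rw [Finset.mem_Icc] at hi
      have hM0 : (0:ℝ) ≤ (M:ℝ) := Nat.cast_nonneg M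
      have hterm2 : (0:ℝ) ≤ η * Real.sqrt n / c := by positivity
      have hterm3 : (0:ℝ) ≤ η * n / Real.log (Real.log (Real.sqrt n)) := by positivity
      show ((Lmax m n x : ℕ) : ℝ) ≤ _
      rw [show Lmax m n x = digit m i x from hsup]
      by_cases hcase : ∃ k : ℕ, 2 ≤ k ∧ i = k^2
      · obtain ⟨k, hk2, rfl⟩ := hcase
        rw [hsq k hk2]
        have hk4 : (4:ℝ) ≤ ((k:ℝ))^2 := by
          have : (4:ℕ) ≤ k^2 := by nlinarith
          exact_mod_cast this
        have hk0 : (0:ℝ) < ((k:ℝ))^2 := by linarith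
        have hkn : ((k:ℝ))^2 ≤ (n:ℝ) := by exact_mod_cast hi.2
        have hlk : Real.log 4 ≤ Real.log (((k:ℝ))^2) := Real.log_le_log (by norm_num) hk4
        have hclk : c ≤ Real.log (Real.log (((k:ℝ))^2)) :=
          Real.log_le_log (by linarith) hlk
        have hlkpos : (0:ℝ) < Real.log (Real.log (((k:ℝ))^2)) := by linarith
        have hval0 : (0:ℝ) ≤ η * ((k:ℝ))^2 / Real.log (Real.log (((k:ℝ))^2)) := by positivity
        have hfl : ((⌊η * ((k:ℝ))^2 / Real.log (Real.log (((k:ℝ))^2))⌋₊ : ℕ) : ℝ) ≤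
            η * ((k:ℝ))^2 / Real.log (Real.log (((k:ℝ))^2)) := Nat.floor_le hval0
        by_cases hsmall : ((k:ℝ))^2 ≤ Real.sqrt n
        · have hbd : η * ((k:ℝ))^2 / Real.log (Real.log (((k:ℝ))^2)) ≤
              η * Real.sqrt n / c :=
            div_le_div₀ (by positivity) (by nlinarith) hc hclk
          linarith
        · push_neg at hsmall
          have hlrtk : Real.log (Real.log (Real.sqrt n)) ≤
              Real.log (Real.log (((k:ℝ))^2)) := by
            apply Real.log_le_log (by linarith)
            exact Real.log_le_log hrtpos (le_of_lt hsmall)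
          have hbd : η * ((k:ℝ))^2 / Real.log (Real.log (((k:ℝ))^2)) ≤
              η * n / Real.log (Real.log (Real.sqrt n)) :=
            div_le_div₀ (by positivity) (by nlinarith) hllrt hlrtk
          linarith
      · have hdM : digit m i x ≤ M := (hns i hi.1 hcase).2
        have : ((digit m i x : ℕ) : ℝ) ≤ (M:ℝ) := by exact_mod_cast hdM
        linarith
    simp only [hudef]
    gcongr
end
end
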